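/- arXiv:2106.15456 — 3 statements merged into one kernel-verified Lean document; each statement's English description precedes it below -/
import Mathlib

section
/- Let c > 0. In ℝ², let J be the 2×2 all-ones matrix, D₁ = diag(c+1, 1), D₂ = diag(1, c+1), Σ₁ = D₁ + J, Σ₂ = D₂ + J. Let q_{Σ₁} and q_{Σ₂} be top eigenvectors (eigenvectors of the largest eigenvalue) of Σ₁ and Σ₂ respectively. Then |cos(q_{Σ₁}, q_{Σ₂})| = 2/√(4 + c²). -/
/-!
Both matrices have the form `!![a, 1; 1, d]`. The largest root `λ` of the characteristic
polynomial `(X - a) (X - d) - 1` is attained by the eigenvector `(1, λ - a)`, and every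
eigenvector of `λ` is a multiple of it, so up to nonzero scalars the top eigenvectors are
`(1, (s - c) / 2)` and `(1, (s + c) / 2)` with `s = √(4 + c²)`. Their second coordinates multiply
to `1`, which makes the inner product `2` and the product of the norms `s`.
-/

open Matrix

/-- Cosine similarity of two vectors in `ℝ^n` (with respect to the standard dot product). -/
noncomputable def cosSim {n : ℕ} (u v : Fin n → ℝ) : ℝ :=
  (u ⬝ᵥ v) / (Real.sqrt (u ⬝ᵥ u) * Real.sqrt (v ⬝ᵥ v))

open Real

theorem abs_cosSim_smul_smul {n : ℕ} (u v : Fin n → ℝ) {t r : ℝ} (ht : t ≠ 0) (hr : r ≠ 0) :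
    |cosSim (t • u) (r • v)| = |cosSim u v| := by
  have hsqrt (s : ℝ) (w : Fin n → ℝ) : √((s • w) ⬝ᵥ (s • w)) = |s| * √(w ⬝ᵥ w) := by
    rw [smul_dotProduct, dotProduct_smul, smul_smul, smul_eq_mul, sqrt_mul (mul_self_nonneg s),
      sqrt_mul_self_eq_abs]
  have htr : |t| * |r| ≠ 0 := by positivity
  rw [cosSim, cosSim, hsqrt, hsqrt, smul_dotProduct, dotProduct_smul, smul_smul, smul_eq_mul]
  simp only [abs_mul, abs_div, abs_abs]
  rw [mul_mul_mul_comm, mul_div_mul_left _ _ htr]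

theorem cosSim_fin_two (x₀ x₁ y₀ y₁ : ℝ) :
    cosSim ![x₀, x₁] ![y₀, y₁] =
      (x₀ * y₀ + x₁ * y₁) / (√(x₀ ^ 2 + x₁ ^ 2) * √(y₀ ^ 2 + y₁ ^ 2)) := by
  simp [cosSim, dotProduct, Fin.sum_univ_two, sq]

theorem abs_cosSim_sqrt_sub_sqrt_add (c : ℝ) :
    |cosSim ![1, (√(4 + c ^ 2) - c) / 2] ![1, (√(4 + c ^ 2) + c) / 2]| = 2 / √(4 + c ^ 2) := by
  set s := √(4 + c ^ 2)
  have hs : s ^ 2 = 4 + c ^ 2 := sq_sqrt (by positivity)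
  have hs₀ : 0 < s := sqrt_pos.mpr (by positivity)
  have hdot : 1 * 1 + (s - c) / 2 * ((s + c) / 2) = 2 := by linear_combination hs / 4
  have hnorm : √(1 ^ 2 + ((s - c) / 2) ^ 2) * √(1 ^ 2 + ((s + c) / 2) ^ 2) = s := by
    rw [← sqrt_mul (by positivity)]
    conv_rhs => rw [← sqrt_sq hs₀.le]
    congr 1
    linear_combination (s ^ 2 - 4 - c ^ 2) / 16 * hs
  rw [cosSim_fin_two, hdot, hnorm, abs_of_pos (by positivity)]

theorem diagonal_add_allOnes_fin_two (x y : ℝ) :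
    diagonal ![x, y] + !![1, 1; 1, 1] = !![x + 1, 1; 1, y + 1] := by
  ext i j; fin_cases i <;> fin_cases j <;> simp

/-- The larger root of `(X - a) (X - d) - b ^ 2`, the characteristic polynomial of
`!![a, b; b, d]`. -/
noncomputable def symmTopEigenvalue (a b d : ℝ) : ℝ := (a + d + √((a - d) ^ 2 + 4 * b ^ 2)) / 2

section SymmFinTwo

variable {a b d l : ℝ} {v : Fin 2 → ℝ}

theorem symm_fin_two_mulVec_eq_smul_iff :
    !![a, b; b, d] *ᵥ v = l • v ↔ a * v 0 + b * v 1 = l * v 0 ∧ b * v 0 + d * v 1 = l * v 1 := by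
  simp [funext_iff, Fin.forall_fin_two, dotProduct, Fin.sum_univ_two]

theorem sub_mul_sub_eq_sq_of_mulVec_eq_smul (hv : v ≠ 0) (he : !![a, b; b, d] *ᵥ v = l • v) :
    (l - a) * (l - d) = b ^ 2 := by
  obtain ⟨he₀, he₁⟩ := symm_fin_two_mulVec_eq_smul_iff.mp he
  have h₀ : (l - a) * v 0 = b * v 1 := by linear_combination -he₀
  have h₁ : (l - d) * v 1 = b * v 0 := by linear_combination -he₁
  have hv' : v 0 ≠ 0 ∨ v 1 ≠ 0 := by
    by_contra! h
    exact hv (funext fun i => by fin_cases i <;> simp [h.1, h.2])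
  rcases hv' with h | h
  · exact mul_right_cancel₀ h (by linear_combination (l - d) * h₀ + b * h₁)
  · exact mul_right_cancel₀ h (by linear_combination (l - a) * h₁ + b * h₀)

variable (a b d) in
theorem mulVec_symmTopEigenvalue_eigenvector :
    !![a, b; b, d] *ᵥ ![b, symmTopEigenvalue a b d - a] =
      symmTopEigenvalue a b d • ![b, symmTopEigenvalue a b d - a] := by
  have hr := sq_sqrt (by positivity : 0 ≤ (a - d) ^ 2 + 4 * b ^ 2)
  refine symm_fin_two_mulVec_eq_smul_iff.mpr ⟨by simp; ring, ?_⟩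
  simp only [cons_val_zero, cons_val_one, symmTopEigenvalue]
  linear_combination -hr / 4

theorem eq_symmTopEigenvalue_of_le (hl : (l - a) * (l - d) = b ^ 2)
    (hle : symmTopEigenvalue a b d ≤ l) : l = symmTopEigenvalue a b d := by
  have hr := sq_sqrt (by positivity : 0 ≤ (a - d) ^ 2 + 4 * b ^ 2)
  have hr₀ := sqrt_nonneg ((a - d) ^ 2 + 4 * b ^ 2)
  have hfac : (l - symmTopEigenvalue a b d) *
      (l - (a + d - √((a - d) ^ 2 + 4 * b ^ 2)) / 2) = 0 := by
    unfold symmTopEigenvalue; linear_combination hl - hr / 4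
  rcases mul_eq_zero.mp hfac with h | h
  · linarith
  · unfold symmTopEigenvalue at hle ⊢; linarith

theorem eq_smul_of_mulVec_eq_smul (hb : b ≠ 0) (hv : v ≠ 0) (he : !![a, b; b, d] *ᵥ v = l • v) :
    v 0 ≠ 0 ∧ v = (v 0 / b) • ![b, l - a] := by
  have h₀ : v 1 = (l - a) * v 0 / b := by
    field_simp; linear_combination (symm_fin_two_mulVec_eq_smul_iff.mp he).1
  refine ⟨fun h => hv (funext fun i => by fin_cases i <;> simp [h, h₀]), ?_⟩
  ext i; fin_cases i <;> simp [h₀] <;> field_simp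

theorem exists_eq_smul_of_isTopEigenvector (hb : b ≠ 0) (hv : v ≠ 0)
    (he : !![a, b; b, d] *ᵥ v = l • v)
    (htop : ∀ (μ : ℝ) (w : Fin 2 → ℝ), w ≠ 0 → !![a, b; b, d] *ᵥ w = μ • w → μ ≤ l) :
    ∃ t : ℝ, t ≠ 0 ∧ v = t • ![b, symmTopEigenvalue a b d - a] := by
  have hw : ![b, symmTopEigenvalue a b d - a] ≠ 0 := fun h => hb (by simpa using congrFun h 0)
  have hl := eq_symmTopEigenvalue_of_le (sub_mul_sub_eq_sq_of_mulVec_eq_smul hv he)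
    (htop _ _ hw (mulVec_symmTopEigenvalue_eigenvector a b d))
  obtain ⟨hv₀, hv⟩ := eq_smul_of_mulVec_eq_smul hb hv he
  exact ⟨v 0 / b, div_ne_zero hv₀ hb, hl ▸ hv⟩

end SymmFinTwo

theorem stmt4_general (c : ℝ)
    (S₁ S₂ : Matrix (Fin 2) (Fin 2) ℝ)
    (hS₁ : S₁ = Matrix.diagonal ![c + 1, 1] + !![1, 1; 1, 1])
    (hS₂ : S₂ = Matrix.diagonal ![1, c + 1] + !![1, 1; 1, 1])
    (q₁ q₂ : Fin 2 → ℝ) (l₁ l₂ : ℝ)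
    (hq₁ : q₁ ≠ 0) (hq₂ : q₂ ≠ 0)
    (he₁ : S₁.mulVec q₁ = l₁ • q₁) (he₂ : S₂.mulVec q₂ = l₂ • q₂)
    (htop₁ : ∀ (μ : ℝ) (v : Fin 2 → ℝ), v ≠ 0 → S₁.mulVec v = μ • v → μ ≤ l₁)
    (htop₂ : ∀ (μ : ℝ) (v : Fin 2 → ℝ), v ≠ 0 → S₂.mulVec v = μ • v → μ ≤ l₂) :
    |cosSim q₁ q₂| = 2 / Real.sqrt (4 + c ^ 2) := by
  rw [hS₁, diagonal_add_allOnes_fin_two] at he₁ htop₁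
  rw [hS₂, diagonal_add_allOnes_fin_two] at he₂ htop₂
  obtain ⟨t₁, ht₁, rfl⟩ := exists_eq_smul_of_isTopEigenvector one_ne_zero hq₁ he₁ htop₁
  obtain ⟨t₂, ht₂, rfl⟩ := exists_eq_smul_of_isTopEigenvector one_ne_zero hq₂ he₂ htop₂
  have hslope₁ :
      symmTopEigenvalue (c + 1 + 1) 1 (1 + 1) - (c + 1 + 1) = (√(4 + c ^ 2) - c) / 2 := by
    rw [symmTopEigenvalue, show (c + 1 + 1 - (1 + 1)) ^ 2 + 4 * 1 ^ 2 = 4 + c ^ 2 by ring]; ring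
  have hslope₂ : symmTopEigenvalue (1 + 1) 1 (c + 1 + 1) - (1 + 1) = (√(4 + c ^ 2) + c) / 2 := by
    rw [symmTopEigenvalue, show (1 + 1 - (c + 1 + 1)) ^ 2 + 4 * 1 ^ 2 = 4 + c ^ 2 by ring]; ring
  rw [abs_cosSim_smul_smul _ _ ht₁ ht₂, hslope₁, hslope₂, abs_cosSim_sqrt_sub_sqrt_add]

/-- For `c > 0`, `Σ₁ = diag(c+1, 1) + J` and `Σ₂ = diag(1, c+1) + J` in `ℝ²`,
if `q₁` and `q₂` are top eigenvectors (eigenvectors of the largest eigenvalue) of `Σ₁`, `Σ₂`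
respectively, then `|cos(q₁, q₂)| = 2 / √(4 + c²)`. -/
theorem stmt4 (c : ℝ) (hc : 0 < c)
    (S₁ S₂ : Matrix (Fin 2) (Fin 2) ℝ)
    (hS₁ : S₁ = Matrix.diagonal ![c + 1, 1] + !![1, 1; 1, 1])
    (hS₂ : S₂ = Matrix.diagonal ![1, c + 1] + !![1, 1; 1, 1])
    (q₁ q₂ : Fin 2 → ℝ) (l₁ l₂ : ℝ)
    (hq₁ : q₁ ≠ 0) (hq₂ : q₂ ≠ 0)
    (he₁ : S₁.mulVec q₁ = l₁ • q₁) (he₂ : S₂.mulVec q₂ = l₂ • q₂)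
    (htop₁ : ∀ (μ : ℝ) (v : Fin 2 → ℝ), v ≠ 0 → S₁.mulVec v = μ • v → μ ≤ l₁)
    (htop₂ : ∀ (μ : ℝ) (v : Fin 2 → ℝ), v ≠ 0 → S₂.mulVec v = μ • v → μ ≤ l₂) :
    |cosSim q₁ q₂| = 2 / Real.sqrt (4 + c ^ 2) :=
  stmt4_general c S₁ S₂ hS₁ hS₂ q₁ q₂ l₁ l₂ hq₁ hq₂ he₁ he₂ htop₁ htop₂
end

section
/- Let c > 0. In ℝ², let J be the 2×2 all-ones matrix, Σ₁ = diag(c+1, 1) + J, Σ₂ = diag(1, c+1) + J, and let q_{Σ₁}, q_{Σ₂} be top eigenvectors of Σ₁ and Σ₂, each chosen with nonnegative coordinates. Let u₁ = (1/√2)(1,1)ᵀ, u₂ = (1/√2)(1,−1)ᵀ, and let B ∈ ℝ^{2×2} be the symmetric matrix with eigenvector u₁ of eigenvalue α and eigenvector u₂ of eigenvalue β, where α² > β² > 0. Then cos(B q_{Σ₁}, B q_{Σ₂}) = (2 + γ√(c² + 4)) / (2γ + √(c² + 4)) with γ = (α² − β²)/(α² + β²), and moreover cos(B q_{Σ₁},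 B q_{Σ₂}) > cos(q_{Σ₁}, q_{Σ₂}) = 2/√(4 + c²). -/
/-!
The top eigenvectors of `Σ₁ = !![c + 2, 1; 1, 2]` and `Σ₂ = !![2, 1; 1, c + 2]` are positive
multiples of `(1, t)` and `(t, 1)`, where `t` is the positive root of `t (t + c) = 1`, so that
`√(c² + 4) = c + 2 t`. These are mirror images under the coordinate swap, and the cosine between
`(u, v)` and `(v, u)` is `(a² - b²) / (a² + b²)`, where `a = u + v` and `b = u - v` are (up to `√2`)
the coordinates of `(u, v)` in the eigenbasis of `B`. Since `B` commutes with the swap and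
multiplies `a` by `α` and `b` by `β`, it shrinks `b² / a²` by the factor `β² / α² < 1`, which
increases the cosine.
-/

open Matrix

theorem cosSim_smul_smul {n : ℕ} {a b : ℝ} (ha : 0 < a) (hb : 0 < b) (u v : Fin n → ℝ) :
    cosSim (a • u) (b • v) = cosSim u v := by
  simp only [cosSim, smul_dotProduct, dotProduct_smul, smul_eq_mul, ← mul_assoc,
    Real.sqrt_mul (mul_self_nonneg _), Real.sqrt_mul_self ha.le, Real.sqrt_mul_self hb.le]
  calc b * a * u ⬝ᵥ v / (a * √(u ⬝ᵥ u) * b * √(v ⬝ᵥ v))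
      = (a * b) * u ⬝ᵥ v / ((a * b) * (√(u ⬝ᵥ u) * √(v ⬝ᵥ v))) := by ring
    _ = u ⬝ᵥ v / (√(u ⬝ᵥ u) * √(v ⬝ᵥ v)) := mul_div_mul_left _ _ (by positivity)

theorem cosSim_vec2_swap (u v : ℝ) :
    cosSim ![u, v] ![v, u] = ((u + v) ^ 2 - (u - v) ^ 2) / ((u + v) ^ 2 + (u - v) ^ 2) := by
  simp only [cosSim, vec2_dotProduct']
  rw [add_comm (v * v), Real.mul_self_sqrt (add_nonneg (mul_self_nonneg u) (mul_self_nonneg v)),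
    show (u + v) ^ 2 - (u - v) ^ 2 = 2 * (u * v + v * u) by ring,
    show (u + v) ^ 2 + (u - v) ^ 2 = 2 * (u * u + v * v) by ring, mul_div_mul_left _ _ two_ne_zero]

theorem sq_sub_div_sq_add_lt_of_sq_lt_sq {a b α β : ℝ} (ha : a ≠ 0) (hb : b ≠ 0)
    (h : β ^ 2 < α ^ 2) :
    (a ^ 2 - b ^ 2) / (a ^ 2 + b ^ 2) <
      ((α * a) ^ 2 - (β * b) ^ 2) / ((α * a) ^ 2 + (β * b) ^ 2) := by
  have hα : α ≠ 0 := by rintro rfl; nlinarith [sq_nonneg β]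
  rw [div_lt_div_iff₀ (by positivity) (by positivity)]
  have : 0 < a ^ 2 * b ^ 2 * (α ^ 2 - β ^ 2) := by have := sub_pos.2 h; positivity
  linear_combination 2 * this

theorem mulVec_vec2_of_eigen {B : Matrix (Fin 2) (Fin 2) ℝ} {α β : ℝ}
    (h₁ : B *ᵥ ![1, 1] = α • ![1, 1]) (h₂ : B *ᵥ ![1, -1] = β • ![1, -1]) (u v : ℝ) :
    B *ᵥ ![u, v] = ![(α * (u + v) + β * (u - v)) / 2, (α * (u + v) - β * (u - v)) / 2] := by
  have huv : ![u, v] = ((u + v) / 2) • ![1, 1] + ((u - v) / 2) • ![(1 : ℝ), -1] := by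
    simp only [smul_vec2, smul_eq_mul, vec2_add]
    exact vec2_eq (by ring) (by ring)
  rw [huv, mulVec_add, mulVec_smul, mulVec_smul, h₁, h₂]
  simp only [smul_vec2, smul_eq_mul, vec2_add]
  exact vec2_eq (by ring) (by ring)

theorem cosSim_mulVec_vec2_swap {B : Matrix (Fin 2) (Fin 2) ℝ} {α β : ℝ}
    (h₁ : B *ᵥ ![1, 1] = α • ![1, 1]) (h₂ : B *ᵥ ![1, -1] = β • ![1, -1]) (u v : ℝ) :
    cosSim (B *ᵥ ![u, v]) (B *ᵥ ![v, u]) =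
      ((α * (u + v)) ^ 2 - (β * (u - v)) ^ 2) / ((α * (u + v)) ^ 2 + (β * (u - v)) ^ 2) := by
  rw [mulVec_vec2_of_eigen h₁ h₂, mulVec_vec2_of_eigen h₁ h₂,
    show ![(α * (v + u) + β * (v - u)) / 2, (α * (v + u) - β * (v - u)) / 2] =
      ![(α * (u + v) - β * (u - v)) / 2, (α * (u + v) + β * (u - v)) / 2]
      from vec2_eq (by ring) (by ring), cosSim_vec2_swap]
  ring

theorem exists_pos_mul_add_eq_one (c : ℝ) :
    ∃ t : ℝ, 0 < t ∧ t * (t + c) = 1 ∧ √(c ^ 2 + 4) = c + 2 * t := by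
  have hs : √(c ^ 2 + 4) ^ 2 = c ^ 2 + 4 := Real.sq_sqrt (by positivity)
  have hcs : c < √(c ^ 2 + 4) := by nlinarith [Real.sqrt_nonneg (c ^ 2 + 4)]
  exact ⟨(√(c ^ 2 + 4) - c) / 2, by linarith, by linear_combination hs / 4, by ring⟩

theorem pos_and_eq_mul_of_top_eigen {c t l x y : ℝ} (ht : 0 < t) (htc : t * (t + c) = 1)
    (h₀ : (c + 2) * x + y = l * x) (h₁ : x + 2 * y = l * y) (hx₀ : 0 ≤ x)
    (hxy : x ≠ 0 ∨ y ≠ 0) (hl : c + 2 + t ≤ l) : 0 < x ∧ y = t * x := by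
  have hy : y = (l - (c + 2)) * x := by linear_combination h₀
  have hx : 0 < x := hx₀.lt_of_ne' fun hx0 => by simp [hx0, hy] at hxy
  -- `l` is a root of `(l - c - 2) (l - 2) = 1`, whose roots are `c + 2 + t` and `2 - t`
  have hroot : x * ((l - (c + 2 + t)) * (l - (2 - t))) = 0 := by
    linear_combination -h₁ + (2 - l) * hy - x * htc
  have hct : 0 < c + 2 * t := by nlinarith
  have hl_eq : l = c + 2 + t := by
    rcases mul_eq_zero.1 ((mul_eq_zero.1 hroot).resolve_left hx.ne') with h | h <;> linarith
  exact ⟨hx, by rw [hy, hl_eq]; ring⟩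

theorem exists_pos_smul_of_top_eigen₁ {c t l : ℝ} (ht : 0 < t) (htc : t * (t + c) = 1)
    {q : Fin 2 → ℝ} (hq : q ≠ 0) (hq₀ : 0 ≤ q 0)
    (he : (diagonal ![c + 1, 1] + !![1, 1; 1, 1]) *ᵥ q = l • q)
    (htop : ∀ (μ : ℝ) (v : Fin 2 → ℝ), v ≠ 0 →
      (diagonal ![c + 1, 1] + !![1, 1; 1, 1]) *ᵥ v = μ • v → μ ≤ l) :
    ∃ x : ℝ, 0 < x ∧ q = x • ![1, t] := by
  have hS : diagonal ![c + 1, 1] + !![1, 1; 1, 1] = !![c + 2, 1; 1, 2] := by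
    ext i j; fin_cases i <;> fin_cases j <;> norm_num [add_assoc, one_add_one_eq_two]
  rw [hS] at he htop
  have hv : !![c + 2, 1; 1, 2] *ᵥ ![1, t] = (c + 2 + t) • ![1, t] := by
    rw [mulVec_fin_two, smul_vec2]
    exact vec2_eq (by simp) (show 1 * 1 + 2 * t = (c + 2 + t) * t by linear_combination -htc)
  have h₀ : (c + 2) * q 0 + q 1 = l * q 0 := by simpa [vecHead, vecTail] using congr_fun he 0
  have h₁ : q 0 + 2 * q 1 = l * q 1 := by simpa [vecHead, vecTail] using congr_fun he 1
  have hq' : q 0 ≠ 0 ∨ q 1 ≠ 0 := by simpa [Fin.exists_fin_two] using Function.ne_iff.1 hq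
  obtain ⟨hx, hy⟩ := pos_and_eq_mul_of_top_eigen ht htc h₀ h₁ hq₀ hq' (htop _ _ (by simp) hv)
  exact ⟨q 0, hx, by ext i; fin_cases i <;> simp [hy, mul_comm]⟩

theorem exists_pos_smul_of_top_eigen₂ {c t l : ℝ} (ht : 0 < t) (htc : t * (t + c) = 1)
    {q : Fin 2 → ℝ} (hq : q ≠ 0) (hq₁ : 0 ≤ q 1)
    (he : (diagonal ![1, c + 1] + !![1, 1; 1, 1]) *ᵥ q = l • q)
    (htop : ∀ (μ : ℝ) (v : Fin 2 → ℝ), v ≠ 0 →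
      (diagonal ![1, c + 1] + !![1, 1; 1, 1]) *ᵥ v = μ • v → μ ≤ l) :
    ∃ x : ℝ, 0 < x ∧ q = x • ![t, 1] := by
  have hS : diagonal ![1, c + 1] + !![1, 1; 1, 1] = !![2, 1; 1, c + 2] := by
    ext i j; fin_cases i <;> fin_cases j <;> norm_num [add_assoc, one_add_one_eq_two]
  rw [hS] at he htop
  have hv : !![2, 1; 1, c + 2] *ᵥ ![t, 1] = (c + 2 + t) • ![t, 1] := by
    rw [mulVec_fin_two, smul_vec2]
    exact vec2_eq (show 2 * t + 1 * 1 = (c + 2 + t) * t by linear_combination -htc)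
      (show 1 * t + (c + 2) * 1 = (c + 2 + t) * 1 by ring)
  have h₀ : 2 * q 0 + q 1 = l * q 0 := by simpa [vecHead, vecTail] using congr_fun he 0
  have h₁ : q 0 + (c + 2) * q 1 = l * q 1 := by simpa [vecHead, vecTail] using congr_fun he 1
  have hq' : q 0 ≠ 0 ∨ q 1 ≠ 0 := by simpa [Fin.exists_fin_two] using Function.ne_iff.1 hq
  obtain ⟨hx, hy⟩ := pos_and_eq_mul_of_top_eigen ht htc (by linear_combination h₁)
    (by linear_combination h₀) hq₁ hq'.symm (htop _ _ (by simp) hv)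
  exact ⟨q 1, hx, by ext i; fin_cases i <;> simp [hy, mul_comm]⟩

theorem stmt5_general (c : ℝ) (hc : 0 < c)
    (S₁ S₂ : Matrix (Fin 2) (Fin 2) ℝ)
    (hS₁ : S₁ = Matrix.diagonal ![c + 1, 1] + !![1, 1; 1, 1])
    (hS₂ : S₂ = Matrix.diagonal ![1, c + 1] + !![1, 1; 1, 1])
    (q₁ q₂ : Fin 2 → ℝ) (l₁ l₂ : ℝ)
    (hq₁ : q₁ ≠ 0) (hq₂ : q₂ ≠ 0)
    (hq₁pos : ∀ i, 0 ≤ q₁ i) (hq₂pos : ∀ i, 0 ≤ q₂ i)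
    (he₁ : S₁.mulVec q₁ = l₁ • q₁) (he₂ : S₂.mulVec q₂ = l₂ • q₂)
    (htop₁ : ∀ (μ : ℝ) (v : Fin 2 → ℝ), v ≠ 0 → S₁.mulVec v = μ • v → μ ≤ l₁)
    (htop₂ : ∀ (μ : ℝ) (v : Fin 2 → ℝ), v ≠ 0 → S₂.mulVec v = μ • v → μ ≤ l₂)
    (B : Matrix (Fin 2) (Fin 2) ℝ) (α β : ℝ)
    (hBu₁ : B.mulVec ((Real.sqrt 2)⁻¹ • ![1, 1]) = α • ((Real.sqrt 2)⁻¹ • ![1, 1]))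
    (hBu₂ : B.mulVec ((Real.sqrt 2)⁻¹ • ![1, -1]) = β • ((Real.sqrt 2)⁻¹ • ![1, -1]))
    (hαβ : β ^ 2 < α ^ 2) :
    cosSim (B.mulVec q₁) (B.mulVec q₂) =
        (2 + (α ^ 2 - β ^ 2) / (α ^ 2 + β ^ 2) * Real.sqrt (c ^ 2 + 4)) /
          (2 * ((α ^ 2 - β ^ 2) / (α ^ 2 + β ^ 2)) + Real.sqrt (c ^ 2 + 4)) ∧
      cosSim q₁ q₂ < cosSim (B.mulVec q₁) (B.mulVec q₂) ∧
      cosSim q₁ q₂ = 2 / Real.sqrt (4 + c ^ 2) := by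
  obtain ⟨t, ht, htc, hs⟩ := exists_pos_mul_add_eq_one c
  subst hS₁ hS₂
  obtain ⟨x₁, hx₁, rfl⟩ := exists_pos_smul_of_top_eigen₁ ht htc hq₁ (hq₁pos 0) he₁ htop₁
  obtain ⟨x₂, hx₂, rfl⟩ := exists_pos_smul_of_top_eigen₂ ht htc hq₂ (hq₂pos 1) he₂ htop₂
  have unscale {v : Fin 2 → ℝ} {μ : ℝ} (h : B *ᵥ ((√2)⁻¹ • v) = μ • ((√2)⁻¹ • v)) :
      B *ᵥ v = μ • v :=
    smul_right_injective (Fin 2 → ℝ) (by positivity : (√2)⁻¹ ≠ (0 : ℝ))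
      (by rwa [mulVec_smul, smul_comm] at h)
  have hp : (1 + t) ^ 2 = t * (c + 2 * t + 2) := by linear_combination -htc
  have hm : (1 - t) ^ 2 = t * (c + 2 * t - 2) := by linear_combination -htc
  have hm0 : 1 - t ≠ 0 := fun h => by
    obtain rfl : t = 1 := by linarith
    linarith
  have hct : 0 < c + 2 * t := by linarith
  have hαβ₀ : 0 < α ^ 2 + β ^ 2 := by nlinarith
  rw [mulVec_smul, mulVec_smul, cosSim_smul_smul hx₁ hx₂, cosSim_smul_smul hx₁ hx₂,
    cosSim_vec2_swap, cosSim_mulVec_vec2_swap (unscale hBu₁) (unscale hBu₂)]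
  refine ⟨?_, sq_sub_div_sq_add_lt_of_sq_lt_sq (by positivity) hm0 hαβ, ?_⟩
  · rw [mul_pow, mul_pow, hp, hm, hs]
    field_simp
    ring
  · rw [add_comm 4, hs, div_eq_div_iff (by positivity) hct.ne', hp, hm]
    ring

/-- For `c > 0`, let `Σ₁ = diag(c+1,1) + J`, `Σ₂ = diag(1,c+1) + J` and let
`q₁, q₂` be top eigenvectors of `Σ₁, Σ₂` with nonnegative coordinates.  Let `B` be the
symmetric `2×2` matrix with eigenvector `u₁ = (1/√2)(1,1)ᵀ` of eigenvalue `α` and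
eigenvector `u₂ = (1/√2)(1,−1)ᵀ` of eigenvalue `β`, where `α² > β² > 0`.  Then
`cos(B q₁, B q₂) = (2 + γ √(c²+4)) / (2γ + √(c²+4))` with `γ = (α²−β²)/(α²+β²)`, and
this exceeds `cos(q₁, q₂) = 2/√(4+c²)`. -/
theorem stmt5 (c : ℝ) (hc : 0 < c)
    (S₁ S₂ : Matrix (Fin 2) (Fin 2) ℝ)
    (hS₁ : S₁ = Matrix.diagonal ![c + 1, 1] + !![1, 1; 1, 1])
    (hS₂ : S₂ = Matrix.diagonal ![1, c + 1] + !![1, 1; 1, 1])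
    (q₁ q₂ : Fin 2 → ℝ) (l₁ l₂ : ℝ)
    (hq₁ : q₁ ≠ 0) (hq₂ : q₂ ≠ 0)
    (hq₁pos : ∀ i, 0 ≤ q₁ i) (hq₂pos : ∀ i, 0 ≤ q₂ i)
    (he₁ : S₁.mulVec q₁ = l₁ • q₁) (he₂ : S₂.mulVec q₂ = l₂ • q₂)
    (htop₁ : ∀ (μ : ℝ) (v : Fin 2 → ℝ), v ≠ 0 → S₁.mulVec v = μ • v → μ ≤ l₁)
    (htop₂ : ∀ (μ : ℝ) (v : Fin 2 → ℝ), v ≠ 0 → S₂.mulVec v = μ • v → μ ≤ l₂)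
    (B : Matrix (Fin 2) (Fin 2) ℝ) (α β : ℝ)
    (hBsymm : Bᵀ = B)
    (hBu₁ : B.mulVec ((Real.sqrt 2)⁻¹ • ![1, 1]) = α • ((Real.sqrt 2)⁻¹ • ![1, 1]))
    (hBu₂ : B.mulVec ((Real.sqrt 2)⁻¹ • ![1, -1]) = β • ((Real.sqrt 2)⁻¹ • ![1, -1]))
    (hαβ : β ^ 2 < α ^ 2) (hβ : 0 < β ^ 2) :
    cosSim (B.mulVec q₁) (B.mulVec q₂) =
        (2 + (α ^ 2 - β ^ 2) / (α ^ 2 + β ^ 2) * Real.sqrt (c ^ 2 + 4)) /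
          (2 * ((α ^ 2 - β ^ 2) / (α ^ 2 + β ^ 2)) + Real.sqrt (c ^ 2 + 4)) ∧
      cosSim q₁ q₂ < cosSim (B.mulVec q₁) (B.mulVec q₂) ∧
      cosSim q₁ q₂ = 2 / Real.sqrt (4 + c ^ 2) :=
  stmt5_general c hc S₁ S₂ hS₁ hS₂ q₁ q₂ l₁ l₂ hq₁ hq₂ hq₁pos hq₂pos he₁ he₂ htop₁ htop₂ B α β hBu₁
    hBu₂ hαβ
end

section
/- Let X ∈ ℝ^{d×n}, let L(A, B) = ‖X − A B X‖_F² for A ∈ ℝ^{d×k}, B ∈ ℝ^{k×d}, and let (A(t), B(t)), t ≥ 0, be a differentiable curve satisfying the gradient flow equations A′(t) = −∇_A L(A(t), B(t)) and B′(t) = −∇_B L(A(t), B(t)). Then the quantity A(t)ᵀ A(t) − B(t) B(t)ᵀ is constant in t; that is, A(t)ᵀ A(t) − B(t) B(t)ᵀ = A(0)ᵀ A(0) − B(0) B(0)ᵀ for all t ≥ 0. -/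
/-!
Write `E = X - ABX` for the residual. Viewing `L` as `b ↦ ‖y - T b‖²` with `T` linear, its gradient
is `-2 T*(y - T b)`, and the adjoint of `V ↦ M V C` for the Frobenius inner product is
`W ↦ Mᵀ W Cᵀ`; so the flow reads `A' = 2 E (BX)ᵀ`, `B' = 2 Aᵀ E Xᵀ`. Then
`(AᵀA)' = A'ᵀA + AᵀA' = 2 BXEᵀA + 2 AᵀEXᵀBᵀ = B'Bᵀ + BB'ᵀ = (BBᵀ)'`, whatever `E` is, so every
entry of `AᵀA - BBᵀ` has zero derivative on `[0, ∞)` and is constant there.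
-/

open Matrix

/-- The space of `m × n` real matrices with the Frobenius inner product, realized as a
Euclidean space. -/
abbrev EMat (m n : ℕ) := EuclideanSpace ℝ (Fin m × Fin n)

/-- Interpret an element of `EMat m n` as a matrix. -/
def toMat {m n : ℕ} (v : EMat m n) : Matrix (Fin m) (Fin n) ℝ :=
  Matrix.of fun i j => v (i, j)

/-- The squared Frobenius norm of a matrix. -/
def frobSq {m n : ℕ} (M : Matrix (Fin m) (Fin n) ℝ) : ℝ :=
  ∑ i, ∑ j, M i j ^ 2

def ofMat {m n : ℕ} (M : Matrix (Fin m) (Fin n) ℝ) : EMat m n :=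
  WithLp.toLp 2 fun q => M q.1 q.2

@[simp]
lemma toMat_ofMat {m n : ℕ} (M : Matrix (Fin m) (Fin n) ℝ) : toMat (ofMat M) = M := rfl

@[simp]
lemma ofMat_toMat {m n : ℕ} (v : EMat m n) : ofMat (toMat v) = v := rfl

lemma ofMat_sub {m n : ℕ} (M N : Matrix (Fin m) (Fin n) ℝ) :
    ofMat (M - N) = ofMat M - ofMat N := rfl

lemma ofMat_smul {m n : ℕ} (c : ℝ) (M : Matrix (Fin m) (Fin n) ℝ) :
    ofMat (c • M) = c • ofMat M := rfl

lemma ofMat_neg {m n : ℕ} (M : Matrix (Fin m) (Fin n) ℝ) : ofMat (-M) = -ofMat M := rfl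

lemma toMat_add {m n : ℕ} (v w : EMat m n) : toMat (v + w) = toMat v + toMat w := rfl

lemma toMat_smul {m n : ℕ} (c : ℝ) (v : EMat m n) : toMat (c • v) = c • toMat v := rfl

lemma frobSq_eq_norm_ofMat_sq {m n : ℕ} (M : Matrix (Fin m) (Fin n) ℝ) :
    frobSq M = ‖ofMat M‖ ^ 2 := by
  simp [frobSq, EuclideanSpace.norm_sq_eq, ofMat, Fintype.sum_prod_type]

lemma inner_ofMat {m n : ℕ} (M N : Matrix (Fin m) (Fin n) ℝ) :
    inner ℝ (ofMat M) (ofMat N) = (Mᵀ * N).trace := by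
  simp only [ofMat, PiLp.inner_apply, RCLike.inner_apply, Real.ringHom_apply, mul_comm,
    Fintype.sum_prod_type, trace, diag_apply, Matrix.mul_apply, transpose_apply]
  exact Finset.sum_comm

lemma inner_ofMat_mul_mul {m k d p : ℕ} (R : Matrix (Fin m) (Fin p) ℝ)
    (M : Matrix (Fin m) (Fin k) ℝ) (V : Matrix (Fin k) (Fin d) ℝ) (C : Matrix (Fin d) (Fin p) ℝ) :
    inner ℝ (ofMat R) (ofMat (M * V * C)) = inner ℝ (ofMat (Mᵀ * R * Cᵀ)) (ofMat V) := by
  rw [inner_ofMat, inner_ofMat, ← Matrix.mul_assoc, trace_mul_comm]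
  simp only [transpose_mul, transpose_transpose, Matrix.mul_assoc]

noncomputable def mulMulCLM {m k d p : ℕ} (M : Matrix (Fin m) (Fin k) ℝ)
    (C : Matrix (Fin d) (Fin p) ℝ) : EMat k d →L[ℝ] EMat m p :=
  LinearMap.toContinuousLinearMap
    { toFun := fun v => ofMat (M * toMat v * C)
      map_add' := fun v w => by
        simp only [toMat_add, Matrix.mul_add, Matrix.add_mul]; rfl
      map_smul' := fun c v => by
        simp only [toMat_smul, Matrix.mul_smul, Matrix.smul_mul]; rfl }

@[simp]
lemma mulMulCLM_apply {m k d p : ℕ} (M : Matrix (Fin m) (Fin k) ℝ) (C : Matrix (Fin d) (Fin p) ℝ)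
    (v : EMat k d) : mulMulCLM M C v = ofMat (M * toMat v * C) := rfl

theorem hasGradientAt_frobSq_sub_mul_mul {m k d p : ℕ} (Y : Matrix (Fin m) (Fin p) ℝ)
    (M : Matrix (Fin m) (Fin k) ℝ) (C : Matrix (Fin d) (Fin p) ℝ) (b : EMat k d) :
    HasGradientAt (fun b' => frobSq (Y - M * toMat b' * C))
      (ofMat (-(2 : ℝ) • (Mᵀ * (Y - M * toMat b * C) * Cᵀ))) b := by
  have hres : HasFDerivAt (fun b' => ofMat Y - mulMulCLM M C b') (-mulMulCLM M C) b :=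
    (mulMulCLM M C).hasFDerivAt.const_sub _
  simp only [frobSq_eq_norm_ofMat_sq, ofMat_sub, hasGradientAt_iff_hasFDerivAt]
  refine hres.norm_sq.congr_fderiv (ContinuousLinearMap.ext fun v => ?_)
  rw [← ofMat_toMat v]
  simp only [_root_.smul_apply, ContinuousLinearMap.comp_apply, _root_.neg_apply,
    innerSL_apply_apply, InnerProductSpace.toDual_apply_apply, mulMulCLM_apply, ← ofMat_sub,
    inner_neg_right, inner_ofMat_mul_mul]
  rw [toMat_ofMat, ofMat_smul, real_inner_smul_left]
  ring

lemma HasDerivAt.toMat_apply {m n : ℕ} {A : ℝ → EMat m n} {a' : EMat m n} {t : ℝ}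
    (h : HasDerivAt A a' t) (i : Fin m) (j : Fin n) :
    HasDerivAt (fun s => toMat (A s) i j) (toMat a' i j) t :=
  (EuclideanSpace.proj (𝕜 := ℝ) (i, j)).hasFDerivAt.comp_hasDerivAt (x := t) h

lemma HasDerivAt.matrix_mul_apply {l m n R : Type*} [Fintype m] [NontriviallyNormedField R]
    {P : R → Matrix l m R} {Q : R → Matrix m n R} {P' : Matrix l m R} {Q' : Matrix m n R} {t : R}
    (hP : ∀ i j, HasDerivAt (fun s => P s i j) (P' i j) t)
    (hQ : ∀ i j, HasDerivAt (fun s => Q s i j) (Q' i j) t) (i : l) (j : n) :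
    HasDerivAt (fun s => (P s * Q s) i j) ((P' * Q t + P t * Q') i j) t := by
  simp only [Matrix.mul_apply, Matrix.add_apply, ← Finset.sum_add_distrib]
  exact HasDerivAt.fun_sum fun k _ => (hP i k).mul (hQ k j)

def balance {d k : ℕ} (a : EMat d k) (b : EMat k d) : Matrix (Fin k) (Fin k) ℝ :=
  (toMat a)ᵀ * toMat a - toMat b * (toMat b)ᵀ

lemma hasDerivAt_balance_apply {d k : ℕ} {A : ℝ → EMat d k} {B : ℝ → EMat k d}
    {a' : EMat d k} {b' : EMat k d} {t : ℝ} (hA : HasDerivAt A a' t) (hB : HasDerivAt B b' t)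
    (i j : Fin k) :
    HasDerivAt (fun s => balance (A s) (B s) i j)
      (((toMat a')ᵀ * toMat (A t) + (toMat (A t))ᵀ * toMat a'
        - (toMat b' * (toMat (B t))ᵀ + toMat (B t) * (toMat b')ᵀ)) i j) t := by
  have hAT : ∀ i j, HasDerivAt (fun s => (toMat (A s))ᵀ i j) ((toMat a')ᵀ i j) t :=
    fun i j => hA.toMat_apply j i
  have hBT : ∀ i j, HasDerivAt (fun s => (toMat (B s))ᵀ i j) ((toMat b')ᵀ i j) t :=
    fun i j => hB.toMat_apply j i
  exact (HasDerivAt.matrix_mul_apply hAT hA.toMat_apply i j).sub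
    (HasDerivAt.matrix_mul_apply hB.toMat_apply hBT i j)

lemma balance_velocity_eq_zero {l m n R : Type*} [Fintype l] [Fintype m] [Fintype n] [CommRing R]
    (A : Matrix l m R) (B : Matrix m l R) (X E : Matrix l n R) (c : R) :
    (c • (E * (B * X)ᵀ))ᵀ * A + Aᵀ * (c • (E * (B * X)ᵀ))
      - (c • (Aᵀ * E * Xᵀ) * Bᵀ + B * (c • (Aᵀ * E * Xᵀ))ᵀ) = 0 := by
  simp only [transpose_smul, transpose_mul, transpose_transpose, Matrix.smul_mul,
    Matrix.mul_smul, Matrix.mul_assoc]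
  abel

lemma eq_of_hasDerivAt_zero_of_nonneg {E : Type*} [NormedAddCommGroup E] [NormedSpace ℝ E]
    {f : ℝ → E} (hf : ∀ s, 0 ≤ s → HasDerivAt f 0 s) {t : ℝ} (ht : 0 ≤ t) : f t = f 0 :=
  constant_of_has_deriv_right_zero (fun s hs => (hf s hs.1).continuousAt.continuousWithinAt)
    (fun s hs => (hf s hs.1).hasDerivWithinAt) t ⟨ht, le_rfl⟩

/-- Along the gradient flow of `L(A, B) = ‖X − A B X‖_F²`, the quantity
`AᵀA − BBᵀ` is conserved: `A(t)ᵀA(t) − B(t)B(t)ᵀ = A(0)ᵀA(0) − B(0)B(0)ᵀ` for all `t ≥ 0`. -/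
theorem stmt11 {d n k : ℕ} (X : Matrix (Fin d) (Fin n) ℝ)
    (L : EMat d k → EMat k d → ℝ)
    (hL : ∀ vA vB, L vA vB = frobSq (X - toMat vA * toMat vB * X))
    (A : ℝ → EMat d k) (B : ℝ → EMat k d)
    (hflowA : ∀ t : ℝ, 0 ≤ t →
      HasDerivAt A (-gradient (fun a => L a (B t)) (A t)) t)
    (hflowB : ∀ t : ℝ, 0 ≤ t →
      HasDerivAt B (-gradient (fun b => L (A t) b) (B t)) t) :
    ∀ t : ℝ, 0 ≤ t →
      (toMat (A t))ᵀ * toMat (A t) - toMat (B t) * (toMat (B t))ᵀ =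
        (toMat (A 0))ᵀ * toMat (A 0) - toMat (B 0) * (toMat (B 0))ᵀ := by
  intro t ht
  have hbalance : ∀ s, 0 ≤ s → ∀ i j, HasDerivAt (fun s => balance (A s) (B s) i j) 0 s := by
    intro s hs i j
    have hLA : (fun a => L a (B s)) =
        fun a => frobSq (X - (1 : Matrix (Fin d) (Fin d) ℝ) * toMat a * (toMat (B s) * X)) :=
      funext fun a => by rw [hL, Matrix.one_mul, Matrix.mul_assoc]
    have hLB : (fun b => L (A s) b) = fun b => frobSq (X - toMat (A s) * toMat b * X) :=
      funext fun b => hL (A s) b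
    have hA := hflowA s hs
    have hB := hflowB s hs
    rw [hLA, (hasGradientAt_frobSq_sub_mul_mul _ _ _ _).gradient] at hA
    rw [hLB, (hasGradientAt_frobSq_sub_mul_mul _ _ _ _).gradient] at hB
    simp only [← ofMat_neg, neg_smul, neg_neg, transpose_one, Matrix.one_mul,
      ← Matrix.mul_assoc (toMat (A s))] at hA hB
    simpa only [toMat_ofMat, balance_velocity_eq_zero, Matrix.zero_apply] using
      hasDerivAt_balance_apply hA hB i j
  ext i j
  exact eq_of_hasDerivAt_zero_of_nonneg (fun s hs => hbalance s hs i j) ht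
end
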